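/- Let K : ℝ → ℝ satisfy K(u) = 0 for |u| > 1 and |K(u)| ≤ K_max for all u, let 0 < h < 1/2 and m ≥ 1 with mh ≥ 1, and let x ∈ (h, 1−h). If η₁, …, η_m are independent square-integrable real random variables with Var(η_j) ≤ v for all j, then Var(Σ_{j=1}^m K_j^h(x) η_j) ≤ 4K_max² v/(mh). -/

import Mathlib

open MeasureTheory ProbabilityTheory

noncomputable section

/-- the binned kernel weight `K_j^h(x) = (1/h)∫_{(j-1)/m}^{j/m} K((x-u)/h) du`
(with `j` 0-indexed, i.e. the integral runs over the `j`-th of the `m` bins of `[0,1]`) -/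
def kernelWeight (K : ℝ → ℝ) (h : ℝ) (m : ℕ) (j : ℕ) (x : ℝ) : ℝ :=
  (1 / h) * ∫ u in ((j : ℝ) / m)..(((j : ℝ) + 1) / m), K ((x - u) / h)

/-- Let `K` vanish outside `[-1,1]` with `|K| ≤ K_max`, `0 < h < 1/2`,
`m ≥ 1` with `mh ≥ 1`, and `x ∈ (h, 1-h)`. If `η₁, …, η_m` are independent square-integrable
real random variables with `Var(η_j) ≤ v` for all `j`, then
`Var(Σ_{j=1}^m K_j^h(x) η_j) ≤ 4K_max² v/(mh)`. -/
theorem stmt14 (K : ℝ → ℝ) (Kmax : ℝ) (hKmeas : Measurable K)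
    (hsupp : ∀ u : ℝ, 1 < |u| → K u = 0) (hbd : ∀ u : ℝ, |K u| ≤ Kmax)
    (h : ℝ) (h0 : 0 < h) (h12 : h < 1 / 2)
    (m : ℕ) (hm : 1 ≤ m) (hmh : 1 ≤ (m : ℝ) * h)
    (x : ℝ) (hx : x ∈ Set.Ioo h (1 - h))
    (Ω : Type) (mΩ : MeasurableSpace Ω) (P : Measure Ω) (hP : IsProbabilityMeasure P)
    (η : Fin m → Ω → ℝ) (hL2 : ∀ j, MemLp (η j) 2 P)
    (hindep : iIndepFun η P)
    (v : ℝ) (hv : ∀ j, variance (η j) P ≤ v) :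
    variance (fun ω => ∑ j : Fin m, kernelWeight K h m (j : ℕ) x * η j ω) P ≤
      4 * Kmax ^ 2 * v / (m * h) := by
  set c : ℕ → ℝ := fun j => kernelWeight K h m j x with hc
  have hK0 : 0 ≤ Kmax := le_trans (abs_nonneg _) (hbd 0)
  have hm0 : (0:ℝ) < m := by exact_mod_cast Nat.pos_of_ne_zero (by omega)
  have hmh0 : (0:ℝ) < (m:ℝ) * h := mul_pos hm0 h0
  have hv0 : 0 ≤ v := le_trans (variance_nonneg (η ⟨0, hm⟩) P) (hv _)
  -- integrand and its integrability
  set f : ℝ → ℝ := fun u => K ((x - u) / h) with hf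
  have hmeasf : Measurable f := hKmeas.comp ((measurable_const.sub measurable_id).div_const h)
  have hII : ∀ a b : ℝ, IntervalIntegrable f volume a b := by
    intro a b
    rw [intervalIntegrable_iff]
    refine Integrable.mono' (g := fun _ => Kmax)
      (integrableOn_const measure_Ioc_lt_top.ne)
      hmeasf.aestronglyMeasurable.restrict ?_
    filter_upwards with u
    simpa [Real.norm_eq_abs] using hbd _
  -- step 1 : Var = ∑ c_j² Var η_j
  have hvar : variance (fun ω => ∑ j : Fin m, c j * η j ω) P
      = ∑ j : Fin m, (c j) ^ 2 * variance (η j) P := by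
    have hfun : (fun ω => ∑ j : Fin m, c j * η j ω)
        = ∑ j : Fin m, (fun ω => c j * η j ω) := by
      ext ω; simp
    rw [hfun, IndepFun.variance_sum]
    · exact Finset.sum_congr rfl fun j _ => variance_const_mul _ _ _
    · exact fun j _ => (hL2 j).const_mul _
    · intro i _ j _ hij
      exact ((hindep.indepFun hij).comp (measurable_const_mul (c i))
        (measurable_const_mul (c j)))
  -- per-bin bound
  have hAbound : ∀ j : ℕ, |c j| ≤ Kmax / ((m:ℝ) * h) := by
    intro j
    have hlen : |((j:ℝ) + 1) / m - (j:ℝ) / m| = 1 / m := by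
      have e : ((j:ℝ) + 1) / m - (j:ℝ) / m = 1 / m := by field_simp; ring
      rw [e, abs_of_nonneg (by positivity)]
    have hint : |∫ u in ((j:ℝ) / m)..(((j:ℝ) + 1) / m), f u| ≤ Kmax * (1 / m) := by
      have := intervalIntegral.norm_integral_le_of_norm_le_const
        (f := f) (a := (j:ℝ)/m) (b := ((j:ℝ)+1)/m) (C := Kmax)
        (fun u _ => by simpa [Real.norm_eq_abs] using hbd _)
      rwa [Real.norm_eq_abs, hlen] at this
    have : |c j| = (1/h) * |∫ u in ((j:ℝ) / m)..(((j:ℝ) + 1) / m), f u| := by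
      have e : c j = (1/h) * ∫ u in ((j:ℝ) / m)..(((j:ℝ) + 1) / m), f u := rfl
      rw [e, abs_mul, abs_of_nonneg (by positivity : (0:ℝ) ≤ 1/h)]
    rw [this]
    calc (1/h) * |∫ u in ((j:ℝ) / m)..(((j:ℝ) + 1) / m), f u|
        ≤ (1/h) * (Kmax * (1/m)) := by
          exact mul_le_mul_of_nonneg_left hint (by positivity)
      _ = Kmax / ((m:ℝ) * h) := by
          rw [div_eq_mul_inv Kmax, mul_inv]; ring
  -- sum of |c j| bound
  have hSum : ∑ j : Fin m, |c (j:ℕ)| ≤ 2 * Kmax := by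
    have habs : ∀ j : ℕ, |c j| ≤ (1/h) * ∫ u in ((j:ℝ)/m)..(((j:ℝ)+1)/m), |f u| := by
      intro j
      have hle : (j:ℝ)/m ≤ ((j:ℝ)+1)/m := by
        exact (div_le_div_iff_of_pos_right hm0).2 (by linarith)
      have h1 : |∫ u in ((j:ℝ)/m)..(((j:ℝ)+1)/m), f u|
          ≤ ∫ u in ((j:ℝ)/m)..(((j:ℝ)+1)/m), |f u| :=
        intervalIntegral.abs_integral_le_integral_abs hle
      have h2 : |c j| = (1/h) * |∫ u in ((j:ℝ) / m)..(((j:ℝ) + 1) / m), f u| := by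
        have e : c j = (1/h) * ∫ u in ((j:ℝ) / m)..(((j:ℝ) + 1) / m), f u := rfl
        rw [e, abs_mul, abs_of_nonneg (by positivity : (0:ℝ) ≤ 1/h)]
      rw [h2]
      exact mul_le_mul_of_nonneg_left h1 (by positivity)
    have hsum2 : ∑ j : Fin m, ∫ u in ((j:ℝ)/m)..(((j:ℝ)+1)/m), |f u|
        = ∫ u in (0:ℝ)..1, |f u| := by
      have key := intervalIntegral.sum_integral_adjacent_intervals
        (a := fun k : ℕ => (k:ℝ)/m) (n := m) (f := fun u => |f u|)
        (fun k _ => (hII _ _).abs)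
      rw [Fin.sum_univ_eq_sum_range (fun j => ∫ u in ((j:ℝ)/m)..(((j:ℝ)+1)/m), |f u|)]
      calc ∑ j ∈ Finset.range m, ∫ u in ((j:ℝ)/m)..(((j:ℝ)+1)/m), |f u|
          = ∑ j ∈ Finset.range m, ∫ u in ((j:ℝ)/m)..((((j+1):ℕ):ℝ)/m), |f u| := by
            refine Finset.sum_congr rfl fun k _ => ?_
            push_cast; ring_nf
        _ = ∫ u in (((0:ℕ):ℝ)/m)..(((m:ℕ):ℝ)/m), |f u| := key
        _ = ∫ u in (0:ℝ)..1, |f u| := by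
            rw [show ((0:ℕ):ℝ)/(m:ℝ) = (0:ℝ) by simp,
              show ((m:ℕ):ℝ)/(m:ℝ) = (1:ℝ) by field_simp]
    have hint01 : ∫ u in (0:ℝ)..1, |f u| ≤ 2 * h * Kmax := by
      rw [intervalIntegral.integral_of_le (by norm_num : (0:ℝ) ≤ 1)]
      have hle : ∀ u, |f u| ≤ Set.indicator (Set.Icc (x-h) (x+h)) (fun _ => Kmax) u := by
        intro u
        by_cases hu : u ∈ Set.Icc (x-h) (x+h)
        · rw [Set.indicator_of_mem hu]; exact hbd _
        · rw [Set.indicator_of_notMem hu]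
          have : 1 < |(x - u)/h| := by
            rw [abs_div, abs_of_pos h0, lt_div_iff₀ h0, one_mul]
            rw [Set.mem_Icc, not_and_or] at hu
            push_neg at hu
            rcases hu with hu | hu
            · rw [abs_of_pos (by linarith)]; linarith
            · rw [abs_of_neg (by linarith)]; linarith
          simp [hf, hsupp _ this]
        -- done
      calc ∫ u in Set.Ioc (0:ℝ) 1, |f u|
          ≤ ∫ u in Set.Ioc (0:ℝ) 1, Set.indicator (Set.Icc (x-h) (x+h)) (fun _ => Kmax) u := by
            apply setIntegral_mono
            · exact (intervalIntegrable_iff_integrableOn_Ioc_of_le (by norm_num)).1 (hII 0 1).abs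
            · exact ((integrable_indicator_iff measurableSet_Icc).2 (integrableOn_const
                measure_Icc_lt_top.ne)).integrableOn
            · exact hle
        _ = ∫ u in Set.Ioc (0:ℝ) 1 ∩ Set.Icc (x-h) (x+h), Kmax := by
            rw [setIntegral_indicator measurableSet_Icc]
        _ = Kmax * (volume (Set.Ioc (0:ℝ) 1 ∩ Set.Icc (x-h) (x+h))).toReal := by
            rw [setIntegral_const, smul_eq_mul, measureReal_def]; ring
        _ = 2 * h * Kmax := by
            have hss : Set.Icc (x-h) (x+h) ⊆ Set.Ioc (0:ℝ) 1 := by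
              intro u hu
              rcases hx with ⟨hx1, hx2⟩
              rcases hu with ⟨hu1, hu2⟩
              constructor <;> [linarith; linarith]
            rw [Set.inter_eq_self_of_subset_right hss, Real.volume_Icc]
            rw [ENNReal.toReal_ofReal (by linarith)]
            ring_nf
    calc ∑ j : Fin m, |c (j:ℕ)|
        ≤ ∑ j : Fin m, (1/h) * ∫ u in ((j:ℝ)/m)..(((j:ℝ)+1)/m), |f u| :=
          Finset.sum_le_sum fun j _ => habs j
      _ = (1/h) * ∑ j : Fin m, ∫ u in ((j:ℝ)/m)..(((j:ℝ)+1)/m), |f u| := by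
          rw [Finset.mul_sum]
      _ = (1/h) * ∫ u in (0:ℝ)..1, |f u| := by rw [hsum2]
      _ ≤ (1/h) * (2 * h * Kmax) := mul_le_mul_of_nonneg_left hint01 (by positivity)
      _ = 2 * Kmax := by field_simp
  -- combine
  have hsq : ∑ j : Fin m, (c (j:ℕ))^2 ≤ 2 * Kmax^2 / ((m:ℝ) * h) := by
    calc ∑ j : Fin m, (c (j:ℕ))^2
        ≤ ∑ j : Fin m, (Kmax / ((m:ℝ)*h)) * |c (j:ℕ)| := by
          apply Finset.sum_le_sum
          intro j _
          calc (c (j:ℕ))^2 = |c (j:ℕ)| * |c (j:ℕ)| := by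
                rw [abs_mul_abs_self]; ring
            _ ≤ (Kmax / ((m:ℝ)*h)) * |c (j:ℕ)| :=
              mul_le_mul_of_nonneg_right (hAbound _) (abs_nonneg _)
      _ = (Kmax / ((m:ℝ)*h)) * ∑ j : Fin m, |c (j:ℕ)| := by rw [Finset.mul_sum]
      _ ≤ (Kmax / ((m:ℝ)*h)) * (2 * Kmax) :=
          mul_le_mul_of_nonneg_left hSum (by positivity)
      _ = 2 * Kmax^2 / ((m:ℝ) * h) := by field_simp
  rw [hvar]
  calc ∑ j : Fin m, (c (j:ℕ))^2 * variance (η j) P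
      ≤ ∑ j : Fin m, (c (j:ℕ))^2 * v :=
        Finset.sum_le_sum fun j _ => mul_le_mul_of_nonneg_left (hv j) (sq_nonneg _)
    _ = (∑ j : Fin m, (c (j:ℕ))^2) * v := by rw [← Finset.sum_mul]
    _ ≤ (2 * Kmax^2 / ((m:ℝ) * h)) * v := mul_le_mul_of_nonneg_right hsq hv0
    _ ≤ 4 * Kmax ^ 2 * v / ((m:ℝ) * h) := by
        rw [div_mul_eq_mul_div, div_le_div_iff₀ hmh0 hmh0]
        nlinarith [mul_nonneg (mul_nonneg (sq_nonneg Kmax) hv0) hmh0.le]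

end
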